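/- Let d ≥ 1 and 1 ≤ k ≤ d be integers, and let x ∈ ℝ^{2d} and J ⊆ [2d] be such that |J| = k and x_i ≠ x_j for every i ∈ J and every j ∉ J. Let π be a uniformly random permutation of [2d], and let N(π) = |{i ∈ [d] : x_{π(i)} ≠ x_{π(i+d)}}|. Then P(N(π) ≤ k/50) ≤ (k/(1.1·d))^{k/3}. -/

import Mathlib

open Finset
open scoped Classical

/-!
Let `P` and `Q` be the sets of `i ∈ [d]` with `π(i) ∈ J`, resp. `π(i + d) ∈ J`. Then
`|P| + |Q| = k`, and every `i` in exactly one of them is counted by `N(π)`, so `N(π) ≤ k/50`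
forces `π` to map at least `m = ⌈49k/100⌉` whole pairs `{i, i + d}` into `J`. A union bound over
the `C(d, m)` choices of `m` pairs, each mapped into `J` with probability `C(k, 2m) / C(2d, 2m)`,
together with `C(d, m)² ≤ C(2d, 2m)`, `C(k, 2m) = C(k, k - 2m) ≤ (50e)^{k/50}` and
`C(d, m) ≥ (d/m)^m`, gives the bound.
-/

open scoped Nat

namespace Equiv.Perm

variable {α : Type*} [Fintype α] [DecidableEq α]

theorem card_filter_forall_mem_apply_eq_self (A : Finset α) :
    #{σ : Perm α | ∀ a ∈ A, σ a = a} = (Fintype.card α - #A)! := by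
  rw [← Fintype.card_subtype]
  have := Fintype.card_congr (Perm.subtypeEquivSubtypePerm (· ∉ A))
  simp only [not_not] at this
  rw [← this, Fintype.card_perm, Fintype.card_subtype, filter_not, filter_mem_eq_inter,
    univ_inter, card_sdiff_of_subset (subset_univ A), Finset.card_univ]

theorem card_filter_forall_apply_eq_le (A : Finset α) (g : A → α) :
    #{π : Perm α | ∀ a : A, π a = g a} ≤ (Fintype.card α - #A)! := by
  rw [← card_filter_forall_mem_apply_eq_self]
  obtain ⟨π₀, hπ₀⟩ | hempty :=
    ({π : Perm α | ∀ a : A, π a = g a} : Finset (Perm α)).eq_empty_or_nonempty.symm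
  · refine card_le_card_of_injOn (π₀⁻¹ * ·) (fun π hπ => ?_) (fun π _ σ _ h => mul_left_cancel h)
    simp only [coe_filter, mem_filter, mem_univ, true_and, Set.mem_ofPred_eq] at hπ₀ hπ ⊢
    intro a ha
    rw [mul_apply, hπ ⟨a, ha⟩, ← hπ₀ ⟨a, ha⟩, inv_eq_iff_eq]
  · rw [hempty, card_empty]
    exact Nat.zero_le _

theorem card_filter_mapsTo_le (A B : Finset α) :
    #{π : Perm α | ∀ a ∈ A, π a ∈ B} ≤ (#B).descFactorial #A * (Fintype.card α - #A)! := by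
  let restrict : Perm α → A → α := fun π a => π a
  let t : Finset (A → α) := (univ : Finset (A ↪ B)).image fun f a => f a
  have ht : #t ≤ (#B).descFactorial #A := by
    refine card_image_le.trans_eq ?_
    rw [Finset.card_univ, Fintype.card_embedding_eq, Fintype.card_coe, Fintype.card_coe]
  refine (card_le_mul_card_image_of_maps_to (f := restrict) (t := t) ?_ _ ?_).trans
    (by rw [mul_comm]; exact Nat.mul_le_mul_right _ ht)
  · intro π hπ
    simp only [mem_filter, mem_univ, true_and] at hπ
    exact mem_image.2 ⟨⟨fun a => ⟨π a, hπ a a.2⟩, fun a b h => Subtype.ext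
      (π.injective (congrArg Subtype.val h))⟩, mem_univ _, rfl⟩
  · intro g _
    refine (card_le_card fun π hπ => ?_).trans (card_filter_forall_apply_eq_le A g)
    simp only [mem_filter, mem_univ, true_and] at hπ ⊢
    exact fun a => congrFun hπ.2 a

end Equiv.Perm

section Pairing

variable {ι β : Type*} [Fintype ι] [Fintype β] [DecidableEq β] (e : ι ⊕ ι ≃ β) (J : Finset β)

theorem card_filter_inl_mem_add_card_filter_inr_mem :
    #{i | e (.inl i) ∈ J} + #{i | e (.inr i) ∈ J} = #J := by
  simp only [card_filter]
  rw [← Fintype.sum_sum_type (f := fun s => if e s ∈ J then 1 else 0), e.sum_comp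
    (fun b => if b ∈ J then 1 else 0), ← card_filter, filter_mem_eq_inter, univ_inter]

theorem card_le_two_mul_card_filter_mem_and_mem_add {γ : Type*} [DecidableEq γ] (x : β → γ)
    (hsep : ∀ b ∈ J, ∀ c ∉ J, x b ≠ x c) :
    #J ≤ 2 * #{i | e (.inl i) ∈ J ∧ e (.inr i) ∈ J} + #{i | x (e (.inl i)) ≠ x (e (.inr i))} := by
  have hcount := card_filter_inl_mem_add_card_filter_inr_mem e J
  set P : Finset ι := {i | e (.inl i) ∈ J}
  set Q : Finset ι := {i | e (.inr i) ∈ J}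
  have hboth : ({i | e (.inl i) ∈ J ∧ e (.inr i) ∈ J} : Finset ι) = P ∩ Q := filter_and _ _ _
  -- a pair with exactly one end in `J` is split by `x`
  have hunion : P ∪ Q ⊆ (P ∩ Q) ∪ ({i | x (e (.inl i)) ≠ x (e (.inr i))} : Finset ι) := by
    intro i
    simp only [P, Q, mem_union, mem_inter, mem_filter, mem_univ, true_and]
    have := hsep (e (.inl i))
    have := hsep (e (.inr i))
    tauto
  have := card_union_add_card_inter P Q
  have := (card_le_card hunion).trans (card_union_le _ _)
  rw [hboth]
  omega

theorem card_filter_le_choose_mul_descFactorial_mul_factorial (m : ℕ) :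
    #{π : Equiv.Perm β | m ≤ #{i | π (e (.inl i)) ∈ J ∧ π (e (.inr i)) ∈ J}} ≤
      (Fintype.card ι).choose m * ((#J).descFactorial (2 * m) * (Fintype.card β - 2 * m)!) := by
  let ends : Finset ι → Finset β := fun T => (T.disjSum T).map e.toEmbedding
  have hends : ∀ T : Finset ι, #(ends T) = 2 * #T := fun T => by
    simp only [ends, card_map, card_disjSum]; ring
  calc _ ≤ #((powersetCard m univ).biUnion fun T =>
          ({π : Equiv.Perm β | ∀ b ∈ ends T, π b ∈ J} : Finset _)) := by
        refine card_le_card fun π hπ => ?_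
        simp only [mem_filter, mem_univ, true_and] at hπ
        obtain ⟨T, hT, hTcard⟩ := exists_subset_card_eq hπ
        simp only [mem_biUnion, mem_powersetCard, mem_filter, mem_univ, true_and]
        refine ⟨T, ⟨subset_univ T, hTcard⟩, fun b hb => ?_⟩
        obtain ⟨s, hs, rfl⟩ := mem_map.1 hb
        rcases s with i | i <;> simp only [inl_mem_disjSum, inr_mem_disjSum] at hs
        exacts [(mem_filter.1 (hT hs)).2.1, (mem_filter.1 (hT hs)).2.2]
    _ ≤ ∑ T ∈ powersetCard m univ, #({π : Equiv.Perm β | ∀ b ∈ ends T, π b ∈ J} : Finset _) :=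
        card_biUnion_le
    _ ≤ ∑ T ∈ powersetCard m (univ : Finset ι),
          (#J).descFactorial (2 * m) * (Fintype.card β - 2 * m)! := by
        refine sum_le_sum fun T hT => ?_
        rw [← (mem_powersetCard.1 hT).2, ← hends]
        exact Equiv.Perm.card_filter_mapsTo_le _ _
    _ = _ := by rw [sum_const, card_powersetCard, Finset.card_univ, smul_eq_mul]

end Pairing

theorem Nat.pow_le_pow_mul_choose {n k : ℕ} (h : k ≤ n) : n ^ k ≤ k ^ k * n.choose k := by
  have key : ∏ i ∈ range k, n * (k - i) ≤ ∏ i ∈ range k, k * (n - i) := by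
    refine prod_le_prod' fun i _ => ?_
    rw [Nat.mul_sub, Nat.mul_sub, mul_comm n k]
    exact Nat.sub_le_sub_left (Nat.mul_le_mul_right i h) _
  rw [prod_mul_distrib, prod_mul_distrib, prod_const, prod_const, card_range,
    ← descFactorial_eq_prod_range, ← descFactorial_eq_prod_range, descFactorial_self,
    descFactorial_eq_factorial_mul_choose] at key
  exact Nat.le_of_mul_le_mul_right (by linarith [key]) (factorial_pos k)

theorem Nat.choose_sq_le_choose_two_mul (n m : ℕ) : n.choose m ^ 2 ≤ (2 * n).choose (2 * m) := by
  rw [sq, two_mul, two_mul, add_choose_eq]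
  exact single_le_sum (f := fun p : ℕ × ℕ => n.choose p.1 * n.choose p.2)
    (fun _ _ => Nat.zero_le _) (show (m, m) ∈ antidiagonal (m + m) from mem_antidiagonal.2 rfl)

open Real in
theorem Nat.choose_le_exp_one_mul_div_rpow {k r : ℕ} {u : ℝ} (hu : 0 < u) (hru : r ≤ u)
    (huk : u ≤ k) : (k.choose r : ℝ) ≤ (exp 1 * k / u) ^ u := by
  have hbase : exp 1 ≤ exp 1 * k / u := by
    rw [le_div_iff₀ hu]; exact mul_le_mul_of_nonneg_left huk (exp_pos 1).le
  rcases Nat.eq_zero_or_pos r with rfl | hr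
  · simpa using one_le_rpow ((one_le_exp zero_le_one).trans hbase) hu.le
  have hr' : (0 : ℝ) < r := by exact_mod_cast hr
  -- `x ≤ exp (x - 1)` at `x = u / r`
  have hratio : (u / r) ^ r ≤ exp (u - r) := by
    calc (u / r) ^ r ≤ exp (u / r - 1) ^ r := by
          gcongr; linarith [add_one_le_exp (u / r - 1)]
      _ = exp (u - r) := by rw [← exp_nat_mul]; congr 1; field_simp
  calc (k.choose r : ℝ) ≤ k ^ r / r ! := choose_le_pow_div r k
    _ = (k / r) ^ r * (r ^ r / r !) := by rw [div_pow, div_mul_div_cancel₀ (by positivity)]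
    _ ≤ (k / r) ^ r * exp r := by gcongr; exact pow_div_factorial_le_exp _ hr'.le r
    _ = (exp 1 * k / u) ^ r * (u / r) ^ r := by
          rw [← exp_one_pow, ← mul_pow, ← mul_pow]; congr 1; field_simp
    _ ≤ (exp 1 * k / u) ^ r * exp (u - r) := by gcongr
    _ ≤ (exp 1 * k / u) ^ (r : ℝ) * (exp 1 * k / u) ^ (u - r) := by
          rw [rpow_natCast, ← exp_one_rpow (u - r)]
          gcongr
    _ = (exp 1 * k / u) ^ u := by
          rw [← rpow_add ((exp_pos 1).trans_le hbase)]; congr 1; ring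

theorem Nat.choose_mul_descFactorial_mul_factorial_div_le (n m a : ℕ) :
    ((n.choose m * (a.descFactorial (2 * m) * (2 * n - 2 * m)!) : ℕ) : ℝ) / (2 * n)! ≤
      a.choose (2 * m) / n.choose m := by
  rcases lt_or_ge n m with hnm | hmn
  · simp [choose_eq_zero_of_lt hnm]
  have hpos : (0 : ℝ) < n.choose m := by exact_mod_cast choose_pos hmn
  have hsq : (n.choose m : ℝ) ^ 2 ≤ (2 * n).choose (2 * m) := by
    exact_mod_cast choose_sq_le_choose_two_mul n m
  have hfac : ((2 * n)! : ℝ) = (2 * n).choose (2 * m) * (2 * m)! * (2 * n - 2 * m)! := by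
    exact_mod_cast (choose_mul_factorial_mul_factorial (by omega : 2 * m ≤ 2 * n)).symm
  calc ((n.choose m * (a.descFactorial (2 * m) * (2 * n - 2 * m)!) : ℕ) : ℝ) / (2 * n)!
      = n.choose m * a.choose (2 * m) / (2 * n).choose (2 * m) := by
        rw [hfac, descFactorial_eq_factorial_mul_choose]; push_cast; field_simp
    _ ≤ n.choose m * a.choose (2 * m) / n.choose m ^ 2 := by gcongr
    _ = a.choose (2 * m) / n.choose m := by field_simp

theorem Nat.choose_two_mul_le_rpow {k m : ℕ} (hk : 0 < k) (hm : 49 * k ≤ 100 * m) :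
    (k.choose (2 * m) : ℝ) ≤ 150 ^ ((k : ℝ) / 50) := by
  have hk' : (0 : ℝ) < k := by exact_mod_cast hk
  rcases lt_or_ge k (2 * m) with hlt | hle
  · rw [choose_eq_zero_of_lt hlt, cast_zero]; positivity
  rw [← choose_symm hle]
  refine (choose_le_exp_one_mul_div_rpow (u := k / 50) (by positivity) ?_ (by linarith)).trans ?_
  · rw [cast_sub hle, le_div_iff₀ (by norm_num)]; push_cast
    have : (49 * k : ℝ) ≤ 100 * m := by exact_mod_cast hm
    linarith
  · rw [show Real.exp 1 * k / (k / 50) = 50 * Real.exp 1 by field_simp]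
    gcongr
    linarith [Real.exp_one_lt_d9]

theorem Nat.rpow_le_choose {d k m : ℕ} (hk : 0 < k) (hkd : k ≤ d) (hm : 49 * k ≤ 100 * m)
    (hmk : 2 * m ≤ k) : (2 * d / k : ℝ) ^ (49 * (k : ℝ) / 100) ≤ d.choose m := by
  have hk' : (0 : ℝ) < k := by exact_mod_cast hk
  have hkd' : (k : ℝ) ≤ d := by exact_mod_cast hkd
  have hm' : (0 : ℝ) < m := by exact_mod_cast (show 0 < m by omega)
  have hmk' : 2 * (m : ℝ) ≤ k := by exact_mod_cast hmk
  calc (2 * d / k : ℝ) ^ (49 * (k : ℝ) / 100)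
      ≤ (2 * d / k : ℝ) ^ (m : ℝ) := by
        refine Real.rpow_le_rpow_of_exponent_le ?_ ?_
        · rw [le_div_iff₀ hk']; linarith
        · have : (49 * k : ℝ) ≤ 100 * m := by exact_mod_cast hm
          linarith
    _ ≤ (d / m : ℝ) ^ m := by
        rw [Real.rpow_natCast]
        refine pow_le_pow_left₀ (by positivity) ?_ m
        rw [div_le_div_iff₀ hk' hm']
        nlinarith
    _ ≤ d.choose m := by
        rw [div_pow, div_le_iff₀ (by positivity), mul_comm]
        exact_mod_cast pow_le_pow_mul_choose (by omega : m ≤ d)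

theorem Nat.choose_two_mul_div_choose_le {d k m : ℕ} (hk : 0 < k) (hkd : k ≤ d)
    (hm : 49 * k ≤ 100 * m) :
    (k.choose (2 * m) : ℝ) / d.choose m ≤
      150 ^ ((k : ℝ) / 50) * (k / (2 * d) : ℝ) ^ (49 * (k : ℝ) / 100) := by
  rcases lt_or_ge k (2 * m) with hlt | hle
  · rw [choose_eq_zero_of_lt hlt, cast_zero, zero_div]; positivity
  rw [← inv_div (2 * (d : ℝ)) k, Real.inv_rpow (by positivity), ← div_eq_mul_inv]
  exact div_le_div₀ (by positivity) (choose_two_mul_le_rpow hk hm)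
    (Real.rpow_pos_of_pos (by have : 0 < d := hk.trans_le hkd; positivity) _)
    (rpow_le_choose hk hkd hm hle)

theorem one_hundred_fifty_rpow_mul_rpow_le {k d : ℝ} (hk : 0 < k) (hkd : k ≤ d) :
    150 ^ (k / 50) * (k / (2 * d)) ^ (49 * k / 100) ≤ (k / (1.1 * d)) ^ (k / 3) := by
  have ht0 : 0 ≤ k / d := div_nonneg hk.le (hk.le.trans hkd)
  have ht1 : k / d ≤ 1 := div_le_one_of_le₀ hkd (hk.le.trans hkd)
  have h2 : 0 ≤ k / d / 2 := by positivity
  have h11 : 0 ≤ k / d / 1.1 := by positivity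
  -- all exponents are multiples of `k / 300`
  have hpow : (150 : ℝ) ^ 6 * (k / d / 2) ^ 147 ≤ (k / d / 1.1) ^ 100 :=
    calc (150 : ℝ) ^ 6 * (k / d / 2) ^ 147 = 150 ^ 6 / 2 ^ 147 * (k / d) ^ 47 * (k / d) ^ 100 := by
          ring
      _ ≤ 1 / 1.1 ^ 100 * (k / d) ^ 100 := by
          gcongr
          exact (mul_le_of_le_one_right (by norm_num) (pow_le_one₀ ht0 ht1)).trans (by norm_num)
      _ = (k / d / 1.1) ^ 100 := by ring
  have key := Real.rpow_le_rpow (mul_nonneg (by norm_num) (pow_nonneg h2 _)) hpow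
    (by positivity : 0 ≤ k / 300)
  rw [Real.mul_rpow (by norm_num) (pow_nonneg h2 _), ← Real.rpow_natCast, ← Real.rpow_natCast,
    ← Real.rpow_natCast, ← Real.rpow_mul (by norm_num), ← Real.rpow_mul h2,
    ← Real.rpow_mul h11] at key
  rw [show k / (2 * d) = k / d / 2 by ring, show k / (1.1 * d) = k / d / 1.1 by ring]
  convert key using 3 <;> push_cast <;> ring

noncomputable def finSumFinEquivTwoMul (d : ℕ) : Fin d ⊕ Fin d ≃ Fin (2 * d) :=
  Equiv.ofBijective (Sum.elim (fun i => ⟨i, by omega⟩) (fun i => ⟨i + d, by omega⟩)) <| by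
    refine (Fintype.bijective_iff_injective_and_card _).2 ⟨?_, by simp [two_mul]⟩
    rintro (i | i) (j | j) h <;> simp [Fin.ext_iff] at h ⊢ <;> omega

/-- The index `i ∈ [d]` of the paper is `i + 1` here, for `i : Fin d`. -/
theorem lem_pi (d k : ℕ) (x : Fin (2 * d) → ℝ) (J : Finset (Fin (2 * d)))
    (hk1 : 1 ≤ k) (hkd : k ≤ d)
    (hJ : J.card = k)
    (hsep : ∀ i ∈ J, ∀ j ∉ J, x i ≠ x j) :
    (((Finset.univ : Finset (Equiv.Perm (Fin (2 * d)))).filter fun π =>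
        (((Finset.univ : Finset (Fin d)).filter fun i =>
          x (π ⟨i.1, by have := i.2; omega⟩) ≠
            x (π ⟨i.1 + d, by have := i.2; omega⟩)).card : ℝ) ≤ k / 50).card : ℝ) /
      (Fintype.card (Equiv.Perm (Fin (2 * d))) : ℝ)
      ≤ (k / (1.1 * d)) ^ ((k : ℝ) / 3) := by
  -- `m = ⌈49 k / 100⌉`
  set m := (49 * k + 99) / 100
  let e := finSumFinEquivTwoMul d
  have hmany : ∀ π : Equiv.Perm (Fin (2 * d)),
      (#{i | x (π (e (.inl i))) ≠ x (π (e (.inr i)))} : ℝ) ≤ k / 50 →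
        m ≤ #{i | π (e (.inl i)) ∈ J ∧ π (e (.inr i)) ∈ J} := by
    intro π hπ
    have hsplit : #J ≤ 2 * #{i | π (e (.inl i)) ∈ J ∧ π (e (.inr i)) ∈ J} +
        #{i | x (π (e (.inl i))) ≠ x (π (e (.inr i)))} :=
      card_le_two_mul_card_filter_mem_and_mem_add (e.trans π) J x hsep
    have hsmall : #{i | x (π (e (.inl i))) ≠ x (π (e (.inr i)))} * 50 ≤ k := by
      rw [le_div_iff₀ (by norm_num)] at hπ
      exact_mod_cast hπ
    omega
  have hcount := card_filter_le_choose_mul_descFactorial_mul_factorial e J m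
  rw [Fintype.card_fin, Fintype.card_fin, hJ] at hcount
  have hk : (0 : ℝ) < k := by exact_mod_cast hk1
  rw [Fintype.card_perm, Fintype.card_fin]
  calc _ ≤ ((d.choose m * (k.descFactorial (2 * m) * (2 * d - 2 * m)!) : ℕ) : ℝ) / (2 * d)! := by
        gcongr
        refine le_trans (card_le_card fun π hπ => ?_) hcount
        simp only [mem_filter, mem_univ, true_and] at hπ ⊢
        exact hmany π hπ
    _ ≤ k.choose (2 * m) / d.choose m := Nat.choose_mul_descFactorial_mul_factorial_div_le d m k
    _ ≤ 150 ^ ((k : ℝ) / 50) * (k / (2 * d) : ℝ) ^ (49 * (k : ℝ) / 100) :=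
        Nat.choose_two_mul_div_choose_le hk1 hkd (by omega)
    _ ≤ _ := one_hundred_fifty_rpow_mul_rpow_le hk (by exact_mod_cast hkd)
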